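/- Let Γ be a locally rectifiable Jordan curve, w ∉ Γ, δ(w) = dist(w,Γ), p ≥ 2, F(z) = (w−z)^{-1}. Write Γ_{2w} = Γ ∩ B(w, 2δ(w)) and suppose ℓ(Γ_{2w}) ≥ 2δ(w). Then ∫_{Γ \ B(w,4δ(w))} |ζ−w|^{-2} |dζ| ≤ C δ(w)^{p-1} ‖F‖_{B_p(Γ)}^p, where C depends only on p. -/

import Mathlib

open MeasureTheory Complex Set Metric
open scoped ENNReal Real

noncomputable section

/-- `γ : ℝ → ℂ` is an (injective) arc-length parametrization: the arc length of `γ` over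
`[s, t]` equals `t - s`. Its range is then a locally rectifiable Jordan curve through `∞`. -/
def IsArcLengthParam (γ : ℝ → ℂ) : Prop :=
  Function.Injective γ ∧
    ∀ s t : ℝ, s ≤ t → eVariationOn γ (Set.Icc s t) = ENNReal.ofReal (t - s)

/-- The boundary Besov `p`-norm (to the `p`-th power) of the test function
`F(z) = (w - z)⁻¹` on the curve parametrized by arc length by `γ`:
`‖F‖_{B_p(Γ)}^p = ∫_Γ ∫_Γ |F(ζ) - F(η)|^p |ζ - η|^{-2} |dζ| |dη|`. -/
def besovTest (p : ℝ) (γ : ℝ → ℂ) (w : ℂ) : ℝ≥0∞ :=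
  ∫⁻ s : ℝ, ∫⁻ t : ℝ,
    ENNReal.ofReal (‖(w - γ s)⁻¹ - (w - γ t)⁻¹‖ ^ p * dist (γ s) (γ t) ^ (-2 : ℝ))

/-! For `ζ ∈ Γ_{2w}` and `η ∈ Γ ∖ B(w, 4δ)` one has `|F(ζ) - F(η)| = |ζ - η| / (|ζ - w| |η - w|)`
with `|ζ - w| < 2δ` and `|ζ - η| ≥ |η - w| / 2`; since `p ≥ 2` the Besov kernel is therefore bounded
below by a multiple of `δ^{-p} |η - w|^{-2}`, and integrating `ζ` over `Γ_{2w}`, of length at least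
`2δ`, gives the claim with `C = 2^{2p-3}`. -/

theorem IsArcLengthParam.lipschitzWith {γ : ℝ → ℂ} (hγ : IsArcLengthParam γ) :
    LipschitzWith 1 γ := by
  refine LipschitzWith.of_edist_le fun s t => ?_
  wlog hst : s ≤ t generalizing s t
  · rw [edist_comm, edist_comm s]
    exact this t s (le_of_not_ge hst)
  calc edist (γ s) (γ t) ≤ eVariationOn γ (Icc s t) :=
        eVariationOn.edist_le γ (left_mem_Icc.2 hst) (right_mem_Icc.2 hst)
    _ = edist s t := by
        rw [hγ.2 s t hst, edist_dist, Real.dist_eq, abs_sub_comm, abs_of_nonneg (sub_nonneg.2 hst)]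

theorem norm_inv_sub_inv {𝕜 : Type*} [NormedField 𝕜] {a b : 𝕜} (ha : a ≠ 0) (hb : b ≠ 0) :
    ‖a⁻¹ - b⁻¹‖ = ‖b - a‖ / (‖a‖ * ‖b‖) := by
  rw [inv_sub_inv ha hb, norm_div, norm_mul]

theorem dist_le_two_mul_dist_of_mem_ball_of_notMem_ball {X : Type*} [PseudoMetricSpace X]
    {w x y : X} {ρ : ℝ} (hx : x ∈ ball w ρ) (hy : y ∉ ball w (2 * ρ)) :
    dist y w ≤ 2 * dist x y := by
  rw [mem_ball] at hx hy
  linarith [dist_triangle y x w, dist_comm x y]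

theorem measure_mul_setLIntegral_le_lintegral_lintegral {α β : Type*} [MeasurableSpace α]
    [MeasurableSpace β] {μ : Measure α} {ν : Measure β} {A : Set α} {B : Set β}
    (hA : MeasurableSet A) (hB : MeasurableSet B) {f : α → β → ℝ≥0∞} {g : β → ℝ≥0∞}
    (hfg : ∀ s ∈ A, ∀ t ∈ B, g t ≤ f s t) :
    μ A * ∫⁻ t in B, g t ∂ν ≤ ∫⁻ s, ∫⁻ t, f s t ∂ν ∂μ :=
  calc μ A * ∫⁻ t in B, g t ∂ν = ∫⁻ _ in A, ∫⁻ t in B, g t ∂ν ∂μ := by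
        rw [setLIntegral_const, mul_comm]
    _ ≤ ∫⁻ s in A, ∫⁻ t, f s t ∂ν ∂μ := setLIntegral_mono' hA fun s hs =>
        (setLIntegral_mono' hB (hfg s hs)).trans (setLIntegral_le_lintegral _ _)
    _ ≤ ∫⁻ s, ∫⁻ t, f s t ∂ν ∂μ := setLIntegral_le_lintegral _ _

theorem two_rpow_mul_rpow_neg_le {p a b r δ : ℝ} (hp : 2 ≤ p) (ha : 0 < a) (haδ : a ≤ 2 * δ)
    (hb : 0 < b) (hbr : b ≤ 2 * r) :
    2 ^ (2 - 2 * p) * δ ^ (-p) * b ^ (-2 : ℝ) ≤ (r / (a * b)) ^ p * r ^ (-2 : ℝ) := by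
  have hr : 0 < r := by linarith
  have hδ : 0 < δ := by linarith
  calc 2 ^ (2 - 2 * p) * δ ^ (-p) * b ^ (-2 : ℝ)
      = (b / 2) ^ (p - 2) * (2 * δ) ^ (-p) * b ^ (-p) := by
        rw [Real.div_rpow hb.le zero_le_two, Real.mul_rpow zero_le_two hδ.le,
          show 2 - 2 * p = (2 - p) + -p by ring, Real.rpow_add two_pos, Real.rpow_sub two_pos,
          Real.rpow_sub hb, Real.rpow_neg hb.le, Real.rpow_neg zero_le_two, Real.rpow_two,
          Real.rpow_neg hb.le, Real.rpow_two]
        field_simp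
        rw [← Real.rpow_two, ← Real.rpow_add two_pos]
        ring_nf
    _ ≤ r ^ (p - 2) * a ^ (-p) * b ^ (-p) := by
        gcongr ?_ * ?_ * _
        · exact Real.rpow_le_rpow (by positivity) (by linarith) (by linarith)
        · exact Real.rpow_le_rpow_of_nonpos ha haδ (by linarith)
    _ = (r / (a * b)) ^ p * r ^ (-2 : ℝ) := by
        rw [Real.div_rpow hr.le (by positivity), Real.mul_rpow ha.le hb.le,
          Real.rpow_sub hr, Real.rpow_neg ha.le, Real.rpow_neg hb.le, Real.rpow_neg hr.le,
          Real.rpow_two]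
        field_simp

def besovKernel (p : ℝ) (w ζ η : ℂ) : ℝ :=
  ‖(w - ζ)⁻¹ - (w - η)⁻¹‖ ^ p * dist ζ η ^ (-2 : ℝ)

theorem besovTest_eq_lintegral_besovKernel (p : ℝ) (γ : ℝ → ℂ) (w : ℂ) :
    besovTest p γ w = ∫⁻ s, ∫⁻ t, ENNReal.ofReal (besovKernel p w (γ s) (γ t)) :=
  rfl

theorem le_besovKernel {p δ : ℝ} (hp : 2 ≤ p) {w ζ η : ℂ} (hζ : ζ ∈ ball w (2 * δ))
    (hζw : ζ ≠ w) (hη : η ∉ ball w (4 * δ)) :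
    2 ^ (2 - 2 * p) * δ ^ (-p) * dist η w ^ (-2 : ℝ) ≤ besovKernel p w ζ η := by
  have hδ : 0 < δ := by linarith [dist_nonneg.trans_lt (mem_ball.1 hζ)]
  have hηw : η ≠ w := by
    rintro rfl
    exact hη (mem_ball_self (by positivity))
  have hηζ : dist η w ≤ 2 * dist ζ η :=
    dist_le_two_mul_dist_of_mem_ball_of_notMem_ball hζ
      (by rwa [← mul_assoc, show (2 : ℝ) * 2 = 4 by norm_num])
  rw [besovKernel, norm_inv_sub_inv (sub_ne_zero.2 hζw.symm) (sub_ne_zero.2 hηw.symm)]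
  simp only [sub_sub_sub_cancel_left, ← dist_eq_norm, dist_comm w]
  exact two_rpow_mul_rpow_neg_le hp (dist_pos.2 hζw) (mem_ball.1 hζ).le (dist_pos.2 hηw) hηζ

theorem ofReal_mul_setLIntegral_le_besovTest {p d : ℝ} (hp : 2 ≤ p) {γ : ℝ → ℂ} {w : ℂ}
    (hγ : Continuous γ) (hw : w ∉ range γ) :
    ENNReal.ofReal (2 ^ (2 - 2 * p) * d ^ (-p)) * volume (γ ⁻¹' ball w (2 * d)) *
        ∫⁻ t in (γ ⁻¹' ball w (4 * d))ᶜ, ENNReal.ofReal (dist (γ t) w ^ (-2 : ℝ)) ≤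
      besovTest p γ w := by
  rw [mul_comm (ENNReal.ofReal _), mul_assoc, ← lintegral_const_mul' _ _ ENNReal.ofReal_ne_top,
    besovTest_eq_lintegral_besovKernel]
  refine measure_mul_setLIntegral_le_lintegral_lintegral (isOpen_ball.preimage hγ).measurableSet
    (isOpen_ball.preimage hγ).measurableSet.compl fun s hs t ht => ?_
  rw [← ENNReal.ofReal_mul' (by positivity)]
  exact ENNReal.ofReal_le_ofReal (le_besovKernel hp hs (fun h => hw ⟨s, h⟩) ht)

/-- For `p ≥ 2`, `w ∉ Γ`, `F(z) = (w-z)⁻¹` and `Γ_{2w} = Γ ∩ B(w, 2δ(w))` with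
`ℓ(Γ_{2w}) ≥ 2δ(w)`, one has
`∫_{Γ∖B(w,4δ(w))} |ζ-w|^{-2} |dζ| ≤ C δ(w)^{p-1} ‖F‖_{B_p(Γ)}^p`, `C = C(p)`. -/
theorem statement17 (p : ℝ) (hp : 2 ≤ p) :
    ∃ C : ℝ, 0 < C ∧
      ∀ (γ : ℝ → ℂ) (w : ℂ) (d : ℝ),
        IsArcLengthParam γ → w ∉ Set.range γ →
        d = Metric.infDist w (Set.range γ) → 0 < d →
        ENNReal.ofReal (2 * d) ≤ volume (γ ⁻¹' Metric.ball w (2 * d)) →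
        (∫⁻ t in (γ ⁻¹' Metric.ball w (4 * d))ᶜ,
            ENNReal.ofReal (dist (γ t) w ^ (-2 : ℝ))) ≤
          ENNReal.ofReal (C * d ^ (p - 1)) * besovTest p γ w := by
  refine ⟨2 ^ (2 * p - 3), by positivity, fun γ w d hγ hw _ hd hlen => ?_⟩
  have hconst : 2 ^ (2 * p - 3) * d ^ (p - 1) * (2 ^ (2 - 2 * p) * d ^ (-p)) * (2 * d) = 1 := by
    rw [show 2 * p - 3 = p + p - 3 by ring, show 2 - 2 * p = 2 - (p + p) by ring,
      Real.rpow_sub two_pos, Real.rpow_sub two_pos, Real.rpow_add two_pos, Real.rpow_sub hd,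
      Real.rpow_neg hd.le, Real.rpow_one]
    field_simp
    norm_num
  set I := ∫⁻ t in (γ ⁻¹' ball w (4 * d))ᶜ, ENNReal.ofReal (dist (γ t) w ^ (-2 : ℝ))
  have hlower : ENNReal.ofReal (2 ^ (2 - 2 * p) * d ^ (-p)) * ENNReal.ofReal (2 * d) * I ≤
      besovTest p γ w :=
    le_trans (by gcongr) (ofReal_mul_setLIntegral_le_besovTest hp hγ.lipschitzWith.continuous hw)
  calc I = ENNReal.ofReal (2 ^ (2 * p - 3) * d ^ (p - 1)) *
        (ENNReal.ofReal (2 ^ (2 - 2 * p) * d ^ (-p)) * ENNReal.ofReal (2 * d) * I) := by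
        rw [← mul_assoc, ← mul_assoc, ← ENNReal.ofReal_mul (by positivity),
          ← ENNReal.ofReal_mul (by positivity), hconst, ENNReal.ofReal_one, one_mul]
    _ ≤ ENNReal.ofReal (2 ^ (2 * p - 3) * d ^ (p - 1)) * besovTest p γ w := by gcongr
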